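/- For any family 𝒯 of complete L-theories, any ordinal α, and any n ≥ 1: RS(𝒯) = α and ds(𝒯) = n if and only if there are pairwise inconsistent L-sentences φ_1, …, φ_n such that 𝒯 is the disjoint union of the subfamilies 𝒯_{φ_1}, …, 𝒯_{φ_n} and each 𝒯_{φ_i} is α-minimal. -/

import Mathlib

open FirstOrder Language Cardinal Set

universe u v w

variable {L : FirstOrder.Language.{u, v}}

/-- A complete theory: a satisfiable set of sentences containing each sentence or its
negation (`Theory.IsMaximal` in Mathlib). -/
abbrev CTheory (L : FirstOrder.Language.{u, v}) : Type max u v :=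
  {T : L.Theory // T.IsMaximal}

/-- The neighbourhood `𝒯_φ = {T ∈ 𝒯 | φ ∈ T}`. -/
def nbhd (𝒯 : Set (CTheory L)) (φ : L.Sentence) : Set (CTheory L) :=
  {T | T ∈ 𝒯 ∧ φ ∈ T.1}

/-- `T` is an accumulation point of `𝒯` if for every sentence `φ ∈ T` the set `𝒯_φ` is
infinite. -/
def IsAccPoint (𝒯 : Set (CTheory L)) (T : CTheory L) : Prop :=
  ∀ φ : L.Sentence, φ ∈ T.1 → (nbhd 𝒯 φ).Infinite

/-- The `E`-closure of `𝒯`: `𝒯` together with all its accumulation points. -/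
def ClE (𝒯 : Set (CTheory L)) : Set (CTheory L) :=
  𝒯 ∪ {T | IsAccPoint 𝒯 T}

/-- The `e`-spectrum of `𝒯`: the cardinality of the set of accumulation points of `𝒯`. -/
noncomputable def eSp (𝒯 : Set (CTheory L)) : Cardinal :=
  Cardinal.mk {T : CTheory L // IsAccPoint 𝒯 T}

/-- Two sentences are inconsistent if `{φ, ψ}` is unsatisfiable. -/
def Inconsistent (φ ψ : L.Sentence) : Prop :=
  ¬ FirstOrder.Language.Theory.IsSatisfiable ({φ, ψ} : L.Theory)

open Classical in
/-- `RSge α 𝒯` says `RS(𝒯) ≥ α`: `RS(𝒯) ≥ 0` iff `𝒯 ≠ ∅`; `RS(𝒯) ≥ 1` iff `𝒯` is infinite;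
for `β ≥ 1`, `RS(𝒯) ≥ β + 1` iff there are pairwise inconsistent sentences `φ_n`, `n ∈ ℕ`,
with `RS(𝒯_{φ_n}) ≥ β` for all `n`; for limit `λ`, `RS(𝒯) ≥ λ` iff `RS(𝒯) ≥ β` for all
`β < λ`. -/
noncomputable def RSge (α : Ordinal.{w}) : Set (CTheory L) → Prop :=
  @Ordinal.limitRecOn (fun _ => Set (CTheory L) → Prop) α
    (fun 𝒯 => 𝒯.Nonempty)
    (fun β ih 𝒯 =>
      if β = 0 then 𝒯.Infinite
      else ∃ φ : ℕ → L.Sentence,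
        (∀ m n : ℕ, m ≠ n → Inconsistent (φ m) (φ n)) ∧ ∀ k : ℕ, ih (nbhd 𝒯 (φ k)))
    (fun β _ ih 𝒯 => ∀ γ : Ordinal, ∀ h : γ < β, ih γ h 𝒯)

/-- `RS(𝒯) = α` for an ordinal `α`: `RS(𝒯) ≥ α` but not `RS(𝒯) ≥ α + 1`. -/
def RSeq (𝒯 : Set (CTheory L)) (α : Ordinal.{w}) : Prop :=
  RSge α 𝒯 ∧ ¬ RSge (α + 1) 𝒯

/-- `RS(𝒯) = ∞`: `RS(𝒯) ≥ α` for every ordinal `α`. -/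
def RSinf (𝒯 : Set (CTheory L)) : Prop :=
  ∀ α : Ordinal.{w}, RSge α 𝒯

/-- `ds(𝒯) = n` (relative to `RS(𝒯) = α`): `n` is the largest natural number for which
there exist `n` pairwise inconsistent sentences `φ_1, …, φ_n` with `RS(𝒯_{φ_i}) = α`. -/
def dsEq (𝒯 : Set (CTheory L)) (α : Ordinal.{w}) (n : ℕ) : Prop :=
  IsGreatest {m : ℕ | ∃ φ : Fin m → L.Sentence,
    (∀ i j : Fin m, i ≠ j → Inconsistent (φ i) (φ j)) ∧
    ∀ i : Fin m, RSeq (nbhd 𝒯 (φ i)) α} n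

/-- `𝒯` is `e`-minimal: for every sentence `φ`, `𝒯_φ` is finite or `𝒯_{¬φ}` is finite. -/
def EMinimal (𝒯 : Set (CTheory L)) : Prop :=
  ∀ φ : L.Sentence, (nbhd 𝒯 φ).Finite ∨ (nbhd 𝒯 φ.not).Finite

/-- `𝒯` is `a`-minimal: `𝒯` has infinitely many accumulation points and for every sentence
`φ`, `𝒯_φ` or `𝒯_{¬φ}` has only finitely many accumulation points. -/
def AMinimal (𝒯 : Set (CTheory L)) : Prop :=
  {T : CTheory L | IsAccPoint 𝒯 T}.Infinite ∧
  ∀ φ : L.Sentence,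
    {T : CTheory L | IsAccPoint (nbhd 𝒯 φ) T}.Finite ∨
    {T : CTheory L | IsAccPoint (nbhd 𝒯 φ.not) T}.Finite

/-- `𝒯` is `α`-minimal: `RS(𝒯) = α` and for every sentence `φ`, `RS(𝒯_φ) < α` or
`RS(𝒯_{¬φ}) < α`. -/
def AlphaMinimal (𝒯 : Set (CTheory L)) (α : Ordinal.{w}) : Prop :=
  RSeq 𝒯 α ∧
  ∀ φ : L.Sentence, ¬ RSge α (nbhd 𝒯 φ) ∨ ¬ RSge α (nbhd 𝒯 φ.not)

/-! If `RS(𝒯) = α` with degree `n`, take `n` pairwise inconsistent sentences `φ_i` whose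
neighbourhoods have rank `α` and replace `φ_1` by `φ_1 ∨ ⋀_j ¬φ_j`, so that the neighbourhoods
cover `𝒯`. A piece that splits into two parts of rank `α`
would give `n + 1` such sentences, so every piece is `α`-minimal.

Conversely, `RS(𝒜 ∪ ℬ) ≥ α` forces `RS(𝒜) ≥ α` or `RS(ℬ) ≥ α`, so a finite union of pieces of
rank `α` has rank `α`. Among pairwise inconsistent sentences, at most one can cut a set of rank
`α` out of an `α`-minimal piece; hence `n` α-minimal pieces admit at most `n` such sentences. -/

open Function

namespace CTheory

lemma mem_iff_realize (T : CTheory L) (φ : L.Sentence) : φ ∈ T.1 ↔ T.2.1.some ⊨ φ := by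
  rw [T.2.mem_iff_models φ]
  exact (T.2.isComplete.realize_sentence_iff φ T.2.1.some).symm

lemma mem_not_iff (T : CTheory L) (φ : L.Sentence) : φ.not ∈ T.1 ↔ φ ∉ T.1 := by
  simp only [mem_iff_realize, Sentence.realize_not]

lemma mem_inf_iff (T : CTheory L) (φ ψ : L.Sentence) :
    φ ⊓ ψ ∈ T.1 ↔ φ ∈ T.1 ∧ ψ ∈ T.1 := by
  simp only [mem_iff_realize]
  exact Formula.realize_inf

lemma mem_sup_iff (T : CTheory L) (φ ψ : L.Sentence) :
    φ ⊔ ψ ∈ T.1 ↔ φ ∈ T.1 ∨ ψ ∈ T.1 := by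
  simp only [mem_iff_realize]
  exact Formula.realize_sup

lemma mem_iInf_iff (T : CTheory L) {ι : Type*} [Finite ι] (φ : ι → L.Sentence) :
    BoundedFormula.iInf φ ∈ T.1 ↔ ∀ i, φ i ∈ T.1 := by
  simp only [mem_iff_realize]
  exact BoundedFormula.realize_iInf

end CTheory

section Inconsistent

variable {φ ψ χ : L.Sentence}

lemma inconsistent_iff : Inconsistent φ ψ ↔ ∀ T : CTheory L, φ ∈ T.1 → ψ ∉ T.1 := by
  refine ⟨fun h T hφ hψ => h (T.2.1.mono (Set.pair_subset hφ hψ)), fun h ⟨M⟩ => ?_⟩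
  exact h ⟨L.completeTheory M, completeTheory.isMaximal L M⟩
    (mem_completeTheory.2 (Theory.realize_sentence_of_mem {φ, ψ} (mem_insert φ {ψ})))
    (mem_completeTheory.2 (Theory.realize_sentence_of_mem {φ, ψ} (mem_insert_of_mem φ rfl)))

lemma Inconsistent.not_mem (h : Inconsistent φ ψ) {T : CTheory L} (hφ : φ ∈ T.1) : ψ ∉ T.1 :=
  inconsistent_iff.1 h T hφ

lemma Inconsistent.mem_not (h : Inconsistent φ ψ) {T : CTheory L} (hψ : ψ ∈ T.1) :
    φ.not ∈ T.1 :=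
  (T.mem_not_iff φ).2 fun hφ => h.not_mem hφ hψ

lemma Inconsistent.symm (h : Inconsistent φ ψ) : Inconsistent ψ φ :=
  inconsistent_iff.2 fun _ hψ hφ => h.not_mem hφ hψ

instance : Std.Symm (Inconsistent (L := L)) :=
  ⟨fun _ _ => Inconsistent.symm⟩

lemma Inconsistent.inf_left (h : Inconsistent φ χ) (ψ : L.Sentence) :
    Inconsistent (φ ⊓ ψ) χ :=
  inconsistent_iff.2 fun T hT => h.not_mem ((T.mem_inf_iff φ ψ).1 hT).1

lemma inconsistent_inf_not_inf (φ χ ψ : L.Sentence) : Inconsistent (φ ⊓ ψ.not) (χ ⊓ ψ) :=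
  inconsistent_iff.2 fun T hT hT' =>
    (T.mem_not_iff ψ).1 ((T.mem_inf_iff _ _).1 hT).2 ((T.mem_inf_iff _ _).1 hT').2

end Inconsistent

section Nbhd

variable (𝒯 : Set (CTheory L)) (φ ψ : L.Sentence)

lemma nbhd_subset : nbhd 𝒯 φ ⊆ 𝒯 :=
  fun _ hT => hT.1

lemma nbhd_nbhd : nbhd (nbhd 𝒯 φ) ψ = nbhd 𝒯 (φ ⊓ ψ) := by
  ext T
  simp only [nbhd, mem_ofPred_eq, CTheory.mem_inf_iff, and_assoc]

lemma nbhd_union (𝒜 ℬ : Set (CTheory L)) : nbhd (𝒜 ∪ ℬ) φ = nbhd 𝒜 φ ∪ nbhd ℬ φ := by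
  ext T
  simp only [nbhd, mem_ofPred_eq, mem_union, or_and_right]

lemma nbhd_iUnion {ι : Type*} (A : ι → Set (CTheory L)) :
    nbhd (⋃ i, A i) φ = ⋃ i, nbhd (A i) φ := by
  ext T
  simp only [nbhd, mem_ofPred_eq, mem_iUnion, exists_and_right]

variable {𝒯 φ ψ}

lemma nbhd_subset_nbhd (h : ∀ T : CTheory L, φ ∈ T.1 → ψ ∈ T.1) : nbhd 𝒯 φ ⊆ nbhd 𝒯 ψ :=
  fun T hT => ⟨hT.1, h T hT.2⟩

lemma Inconsistent.disjoint_nbhd (h : Inconsistent φ ψ) (𝒯 : Set (CTheory L)) :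
    Disjoint (nbhd 𝒯 φ) (nbhd 𝒯 ψ) :=
  disjoint_left.2 fun _ hT hT' => h.not_mem hT.2 hT'.2

lemma iUnion_nbhd_eq_self {ι : Type*} {φ : ι → L.Sentence}
    (h : ∀ T : CTheory L, ∃ i, φ i ∈ T.1) : ⋃ i, nbhd 𝒯 (φ i) = 𝒯 :=
  Subset.antisymm (iUnion_subset fun i => nbhd_subset 𝒯 (φ i))
    fun T hT => mem_iUnion.2 ((h T).imp fun _ hi => ⟨hT, hi⟩)

end Nbhd

section Pairwise

variable {β ι : Type*} {r : β → β → Prop} [Std.Symm r]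

lemma Pairwise.update [DecidableEq ι] {f : ι → β} (hf : Pairwise (r on f)) {i : ι} {b : β}
    (hb : ∀ j, j ≠ i → r b (f j)) : Pairwise (r on update f i b) := by
  intro j k hjk
  simp only [onFun]
  rcases eq_or_ne j i with rfl | hj
  · rw [update_self, update_of_ne hjk.symm]
    exact hb k hjk.symm
  rcases eq_or_ne k i with rfl | hk
  · rw [update_self, update_of_ne hj]
    exact symm (hb j hj)
  · rw [update_of_ne hj, update_of_ne hk]
    exact hf hjk

lemma Pairwise.fin_cons {n : ℕ} {f : Fin n → β} (hf : Pairwise (r on f)) {b : β}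
    (hb : ∀ i, r b (f i)) : Pairwise (r on (Fin.cons b f : Fin (n + 1) → β)) := by
  intro j k hjk
  induction j using Fin.cases <;> induction k using Fin.cases
  · exact absurd rfl hjk
  · exact hb _
  · exact symm (hb _)
  · exact hf fun h => hjk (congrArg Fin.succ h)

end Pairwise

section Rank

variable {α β : Ordinal.{w}} {𝒯 𝒜 ℬ : Set (CTheory L)}

lemma rsge_zero_iff : RSge (0 : Ordinal.{w}) 𝒯 ↔ 𝒯.Nonempty := by
  unfold RSge
  rw [Ordinal.limitRecOn_zero]

lemma rsge_one_iff : RSge (1 : Ordinal.{w}) 𝒯 ↔ 𝒯.Infinite := by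
  unfold RSge
  rw [← zero_add 1, Ordinal.limitRecOn_add_one, if_pos rfl]

lemma rsge_succ_iff (hβ : β ≠ 0) :
    RSge (β + 1) 𝒯 ↔ ∃ φ : ℕ → L.Sentence,
      Pairwise (Inconsistent on φ) ∧ ∀ k, RSge β (nbhd 𝒯 (φ k)) := by
  unfold RSge
  rw [Ordinal.limitRecOn_add_one, if_neg hβ]
  rfl

lemma rsge_limit_iff (hβ : Order.IsSuccLimit β) : RSge β 𝒯 ↔ ∀ γ < β, RSge γ 𝒯 := by
  unfold RSge
  rw [Ordinal.limitRecOn_limit _ _ _ _ hβ]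

lemma RSge.mono (h : RSge α 𝒜) (hsub : 𝒜 ⊆ ℬ) : RSge α ℬ := by
  induction α using Ordinal.limitRecOn generalizing 𝒜 ℬ with
  | zero =>
    rw [rsge_zero_iff] at h ⊢
    exact h.mono hsub
  | add_one β ih =>
    rcases eq_or_ne β 0 with rfl | hβ
    · rw [zero_add, rsge_one_iff] at h ⊢
      exact h.mono hsub
    · rw [rsge_succ_iff hβ] at h ⊢
      obtain ⟨φ, hφ, hk⟩ := h
      exact ⟨φ, hφ, fun k => ih (hk k) fun T hT => ⟨hsub hT.1, hT.2⟩⟩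
  | limit β hlim ih =>
    rw [rsge_limit_iff hlim] at h ⊢
    exact fun γ hγ => ih γ hγ (h γ hγ) hsub

lemma RSge.of_succ (h : RSge (β + 1) 𝒯) : RSge β 𝒯 := by
  rcases eq_or_ne β 0 with rfl | hβ
  · rw [zero_add, rsge_one_iff] at h
    exact rsge_zero_iff.2 h.nonempty
  · obtain ⟨φ, -, hk⟩ := (rsge_succ_iff hβ).1 h
    exact (hk 0).mono (nbhd_subset 𝒯 (φ 0))

lemma RSge.of_le (h : RSge α 𝒯) (hβα : β ≤ α) : RSge β 𝒯 := by
  induction α using Ordinal.limitRecOn generalizing β with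
  | zero => rwa [nonpos_iff_eq_zero.1 hβα]
  | add_one α ih =>
    rcases hβα.lt_or_eq with hlt | rfl
    · exact ih h.of_succ (Order.lt_add_one_iff.1 hlt)
    · exact h
  | limit α hlim _ =>
    rcases hβα.lt_or_eq with hlt | rfl
    · exact (rsge_limit_iff hlim).1 h β hlt
    · exact h

lemma not_rsge_empty (α : Ordinal.{w}) : ¬ RSge α (∅ : Set (CTheory L)) := fun h =>
  not_nonempty_empty (rsge_zero_iff.1 (h.of_le zero_le))

lemma rsge_succ_of_infinite (hβ : β ≠ 0) {φ : ℕ → L.Sentence}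
    (hφ : Pairwise (Inconsistent on φ)) (hinf : {k | RSge β (nbhd 𝒯 (φ k))}.Infinite) :
    RSge (β + 1) 𝒯 := by
  let e := hinf.natEmbedding
  exact (rsge_succ_iff hβ).2
    ⟨fun k => φ (e k), hφ.comp_of_injective (Subtype.val_injective.comp e.injective),
      fun k => (e k).2⟩

lemma rsge_union_iff : RSge α (𝒜 ∪ ℬ) ↔ RSge α 𝒜 ∨ RSge α ℬ := by
  refine ⟨fun h => ?_, fun h => h.elim (·.mono subset_union_left) (·.mono subset_union_right)⟩
  induction α using Ordinal.limitRecOn generalizing 𝒜 ℬ with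
  | zero =>
    obtain ⟨T, hT | hT⟩ := rsge_zero_iff.1 h
    · exact Or.inl (rsge_zero_iff.2 ⟨T, hT⟩)
    · exact Or.inr (rsge_zero_iff.2 ⟨T, hT⟩)
  | add_one β ih =>
    rcases eq_or_ne β 0 with rfl | hβ
    · simp only [zero_add, rsge_one_iff] at h ⊢
      exact infinite_union.1 h
    obtain ⟨φ, hφ, hk⟩ := (rsge_succ_iff hβ).1 h
    have hsplit : {k | RSge β (nbhd 𝒜 (φ k))} ∪ {k | RSge β (nbhd ℬ (φ k))} = Set.univ :=
      eq_univ_of_forall fun k => ih (nbhd_union (φ k) 𝒜 ℬ ▸ hk k)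
    exact (infinite_union.1 (hsplit ▸ infinite_univ)).imp
      (rsge_succ_of_infinite hβ hφ) (rsge_succ_of_infinite hβ hφ)
  | limit β hlim ih =>
    simp only [rsge_limit_iff hlim] at h ⊢
    by_contra! hne
    obtain ⟨⟨γ₁, hγ₁, h𝒜⟩, ⟨γ₂, hγ₂, hℬ⟩⟩ := hne
    rcases ih _ (max_lt hγ₁ hγ₂) (h _ (max_lt hγ₁ hγ₂)) with h' | h'
    · exact h𝒜 (h'.of_le (le_max_left γ₁ γ₂))
    · exact hℬ (h'.of_le (le_max_right γ₁ γ₂))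

lemma rsge_iUnion_iff {ι : Type*} [Finite ι] {A : ι → Set (CTheory L)} :
    RSge α (⋃ i, A i) ↔ ∃ i, RSge α (A i) := by
  classical
  refine ⟨fun h => ?_, fun ⟨i, hi⟩ => hi.mono (subset_iUnion A i)⟩
  cases nonempty_fintype ι
  suffices ∀ s : Finset ι, RSge α (⋃ i ∈ s, A i) → ∃ i, RSge α (A i) from
    this Finset.univ (by simpa using h)
  intro s
  induction s using Finset.induction_on with
  | empty => simp [not_rsge_empty]
  | insert i s _ ih =>
    rw [Finset.set_biUnion_insert, rsge_union_iff]
    exact fun h => h.elim (⟨i, ·⟩) ih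

lemma RSeq.of_subset (h : RSeq 𝒯 α) (hsub : 𝒜 ⊆ 𝒯) (hge : RSge α 𝒜) : RSeq 𝒜 α :=
  ⟨hge, fun h' => h.2 (h'.mono hsub)⟩

lemma rseq_iUnion {ι : Type*} [Finite ι] [Nonempty ι] {A : ι → Set (CTheory L)}
    (h : ∀ i, RSeq (A i) α) : RSeq (⋃ i, A i) α :=
  ⟨(h (Classical.arbitrary ι)).1.mono (subset_iUnion A _), fun h' =>
    let ⟨i, hi⟩ := rsge_iUnion_iff.1 h'
    (h i).2 hi⟩

end Rank

section Partition

variable {α : Ordinal.{w}} {𝒯 𝒜 : Set (CTheory L)}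

lemma AlphaMinimal.not_rsge_of_inconsistent (h : AlphaMinimal 𝒜 α) {ψ χ : L.Sentence}
    (hψχ : Inconsistent ψ χ) (hψ : RSge α (nbhd 𝒜 ψ)) : ¬ RSge α (nbhd 𝒜 χ) := fun hχ =>
  (h.2 ψ).elim (· hψ) (· (hχ.mono (nbhd_subset_nbhd fun _ => hψχ.mem_not)))

lemma card_le_of_alphaMinimal_cover {ι κ : Type*} [Fintype ι] [Fintype κ]
    {A : ι → Set (CTheory L)} (hA : ∀ i, AlphaMinimal (A i) α) {ψ : κ → L.Sentence}
    (hψ : Pairwise (Inconsistent on ψ))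
    (hrank : ∀ k, RSge α (nbhd (⋃ i, A i) (ψ k))) : Fintype.card κ ≤ Fintype.card ι := by
  have hpiece : ∀ k, ∃ i, RSge α (nbhd (A i) (ψ k)) := fun k =>
    rsge_iUnion_iff.1 (nbhd_iUnion (ψ k) A ▸ hrank k)
  choose g hg using hpiece
  refine Fintype.card_le_of_injective g fun k l hkl => ?_
  by_contra hne
  exact (hA (g k)).not_rsge_of_inconsistent (hψ hne) (hg k) (hkl ▸ hg l)

lemma exists_cover_of_pairwise_inconsistent {ι : Type*} [Finite ι] {φ : ι → L.Sentence}
    (hφ : Pairwise (Inconsistent on φ)) (i₀ : ι) :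
    ∃ φ' : ι → L.Sentence, Pairwise (Inconsistent on φ') ∧
      (∀ i (T : CTheory L), φ i ∈ T.1 → φ' i ∈ T.1) ∧ ∀ T : CTheory L, ∃ i, φ' i ∈ T.1 := by
  classical
  set χ := φ i₀ ⊔ BoundedFormula.iInf fun j => (φ j).not
  have hχ : ∀ T : CTheory L, χ ∈ T.1 ↔ φ i₀ ∈ T.1 ∨ ∀ j, φ j ∉ T.1 := fun T => by
    simp only [χ, CTheory.mem_sup_iff, CTheory.mem_iInf_iff, CTheory.mem_not_iff]
  have hweaker : ∀ i (T : CTheory L), φ i ∈ T.1 → update φ i₀ χ i ∈ T.1 := by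
    intro i T hT
    rcases eq_or_ne i i₀ with rfl | hi
    · rw [update_self, hχ]
      exact Or.inl hT
    · rwa [update_of_ne hi]
  refine ⟨update φ i₀ χ, hφ.update fun j hj => ?_, hweaker, fun T => ?_⟩
  · refine inconsistent_iff.2 fun T hT => ?_
    rcases (hχ T).1 hT with h | h
    · exact (hφ hj.symm).not_mem h
    · exact h j
  · by_cases h : ∃ j, φ j ∈ T.1
    · obtain ⟨j, hj⟩ := h
      exact ⟨j, hweaker j T hj⟩
    · exact ⟨i₀, by rw [update_self, hχ]; exact Or.inr (not_exists.1 h)⟩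

def splitFamily {n : ℕ} (φ : Fin n → L.Sentence) (i : Fin n) (ψ : L.Sentence) :
    Fin (n + 1) → L.Sentence :=
  Fin.cons (φ i ⊓ ψ.not) (update φ i (φ i ⊓ ψ))

lemma Pairwise.inconsistent_splitFamily {n : ℕ} {φ : Fin n → L.Sentence}
    (hφ : Pairwise (Inconsistent on φ)) (i : Fin n) (ψ : L.Sentence) :
    Pairwise (Inconsistent on splitFamily φ i ψ) := by
  refine (hφ.update fun j hj => (hφ hj.symm).inf_left ψ).fin_cons fun j => ?_
  rcases eq_or_ne j i with rfl | hj
  · rw [update_self]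
    exact inconsistent_inf_not_inf _ _ _
  · rw [update_of_ne hj]
    exact (hφ hj.symm).inf_left _

lemma alphaMinimal_nbhd_of_dsEq {n : ℕ} (hds : dsEq 𝒯 α n) {φ : Fin n → L.Sentence}
    (hφ : Pairwise (Inconsistent on φ)) (hrank : ∀ i, RSeq (nbhd 𝒯 (φ i)) α)
    (i : Fin n) : AlphaMinimal (nbhd 𝒯 (φ i)) α := by
  refine ⟨hrank i, fun ψ => ?_⟩
  by_contra! h
  have hpart : ∀ χ, RSge α (nbhd (nbhd 𝒯 (φ i)) χ) → RSeq (nbhd 𝒯 (φ i ⊓ χ)) α := fun χ h =>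
    nbhd_nbhd 𝒯 (φ i) χ ▸ (hrank i).of_subset (nbhd_subset _ χ) h
  have hsplit : ∀ a, RSeq (nbhd 𝒯 (splitFamily φ i ψ a)) α := by
    intro a
    induction a using Fin.cases with
    | zero => exact hpart _ h.2
    | succ j =>
      rcases eq_or_ne j i with rfl | hj
      · simpa [splitFamily] using hpart _ h.1
      · simpa [splitFamily, update_of_ne hj] using hrank j
  have := hds.2 ⟨_, hφ.inconsistent_splitFamily i ψ, hsplit⟩
  omega

end Partition

/-- Proposition 2.14: `RS(𝒯) = α` with `ds(𝒯) = n` if and only if `𝒯` is a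
disjoint union of subfamilies `𝒯_{φ_1}, …, 𝒯_{φ_n}`, for some pairwise inconsistent
sentences `φ_1, …, φ_n`, each of which is `α`-minimal. -/
theorem rank_iff_alphaMinimal_partition (𝒯 : Set (CTheory L)) (α : Ordinal.{w})
    (n : ℕ) (hn : 1 ≤ n) :
    (RSeq 𝒯 α ∧ dsEq 𝒯 α n) ↔
    ∃ φ : Fin n → L.Sentence,
      (∀ i j : Fin n, i ≠ j → Inconsistent (φ i) (φ j)) ∧
      (∀ i j : Fin n, i ≠ j → Disjoint (nbhd 𝒯 (φ i)) (nbhd 𝒯 (φ j))) ∧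
      (⋃ i : Fin n, nbhd 𝒯 (φ i)) = 𝒯 ∧
      ∀ i : Fin n, AlphaMinimal (nbhd 𝒯 (φ i)) α := by
  constructor
  · rintro ⟨hR, hds⟩
    obtain ⟨φ₀, hφ₀, hrank₀⟩ := hds.1
    obtain ⟨φ, hφ, hweaker, hcover⟩ :=
      exists_cover_of_pairwise_inconsistent hφ₀ ⟨0, hn⟩
    have hrank : ∀ i, RSeq (nbhd 𝒯 (φ i)) α := fun i =>
      hR.of_subset (nbhd_subset 𝒯 _) ((hrank₀ i).1.mono (nbhd_subset_nbhd (hweaker i)))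
    exact ⟨φ, fun i j => @hφ i j, fun i j hij => (hφ hij).disjoint_nbhd 𝒯,
      iUnion_nbhd_eq_self hcover, alphaMinimal_nbhd_of_dsEq hds hφ hrank⟩
  · rintro ⟨φ, hφ, -, hcover, hmin⟩
    have : Nonempty (Fin n) := ⟨⟨0, hn⟩⟩
    refine ⟨hcover ▸ rseq_iUnion fun i => (hmin i).1, ⟨φ, hφ, fun i => (hmin i).1⟩, ?_⟩
    rintro m ⟨ψ, hψ, hrank⟩
    simpa using card_le_of_alphaMinimal_cover hmin hψ
      fun k => hcover.symm ▸ (hrank k).1
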